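/- Let F be a finite field with p^f > 3 elements, q an odd prime dividing p^f - 1, and B = ⟨b⟩ cyclic of order q. The subgroup V₊(FB) of symmetric normalized units (units u with u* = u) has order (p^f - 1)^((q-1)/2). -/

import Mathlib

open MonoidAlgebra

noncomputable def aug (F : Type*) [CommSemiring F] (G : Type*) [Monoid G] :
    MonoidAlgebra F G →ₐ[F] F := MonoidAlgebra.lift F F G 1

noncomputable def invo (F : Type*) [CommSemiring F] (G : Type*) [Group G] :
    MonoidAlgebra F G → MonoidAlgebra F G := fun x => MonoidAlgebra.mapDomain (·⁻¹) x

noncomputable def normUnits (F : Type*) [CommSemiring F] (G : Type*) [Monoid G] :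
    Subgroup (MonoidAlgebra F G)ˣ :=
  (Units.map (aug F G : MonoidAlgebra F G →* F)).ker

noncomputable def grpUnit (F : Type*) [CommSemiring F] (G : Type*) [Group G] :
    G →* (MonoidAlgebra F G)ˣ where
  toFun g :=
    { val := MonoidAlgebra.of F G g
      inv := MonoidAlgebra.of F G g⁻¹
      val_inv := by rw [← map_mul, mul_inv_cancel, map_one]
      inv_val := by rw [← map_mul, inv_mul_cancel, map_one] }
  map_one' := Units.ext (map_one (MonoidAlgebra.of F G))
  map_mul' g h := Units.ext (map_mul (MonoidAlgebra.of F G) g h)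

/-!
Since `q ∣ |F| - 1`, the field `F` contains a primitive `q`-th root of unity `ζ`, and `q` is
invertible in `F`. Hence, after identifying `B` with `ℤ/q`, the discrete Fourier transform
`x ↦ (k ↦ ∑_g x_g ζ^(k g))` is an `F`-algebra isomorphism `FB ≃ F^(ℤ/q)`. It turns the augmentation
into evaluation at `0` and the involution `*` into the reflection `k ↦ -k`, so the symmetric
normalized units correspond to even functions `ℤ/q → Fˣ` taking the value `1` at `0`. Such a
function is freely determined by its values on one representative of each of the `(q - 1) / 2`
pairs `{k, -k}` with `k ≠ 0`.
-/

lemma natCast_ne_zero_of_dvd_card_sub_one {R : Type*} [Ring R] [Nontrivial R] [Fintype R]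
    {n : ℕ} (hn : n ∣ Fintype.card R - 1) : (n : R) ≠ 0 := by
  obtain ⟨m, hm⟩ := hn
  have hcard : (Fintype.card R : R) = n * m + 1 := by
    rw [← Nat.cast_mul, ← hm, Nat.cast_sub Fintype.card_pos, Nat.cast_one, sub_add_cancel]
  intro h
  rw [Nat.cast_card_eq_zero, h, zero_mul, zero_add] at hcard
  exact zero_ne_one hcard

lemma exists_isPrimitiveRoot_of_dvd_card_sub_one {F : Type*} [Field F] [Fintype F] {n : ℕ}
    (hn : n ∣ Fintype.card F - 1) : ∃ ζ : F, IsPrimitiveRoot ζ n := by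
  obtain ⟨g, hg⟩ := IsCyclic.exists_ofOrder_eq_natCard (α := Fˣ)
  rw [Nat.card_units, Nat.card_eq_fintype_card] at hg
  have hgen : IsPrimitiveRoot (g : F) (Fintype.card F - 1) :=
    IsPrimitiveRoot.coe_units_iff.mpr (hg ▸ IsPrimitiveRoot.orderOf g)
  obtain ⟨m, hm⟩ := hn
  have hm0 : m ≠ 0 := by
    rintro rfl
    have := Fintype.one_lt_card (α := F)
    omega
  refine ⟨g ^ m, ?_⟩
  simpa [hm, hm0] using hgen.pow_of_dvd hm0 (hm ▸ dvd_mul_left m n)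

namespace MonoidAlgebra

variable {F : Type*} [Field F] {n : ℕ} {G : Type*} [Group G] (σ : G ≃* Multiplicative (ZMod n))

noncomputable def fourierChar (ψ : AddChar (ZMod n) F) : G →* (ZMod n → F) :=
  MonoidHom.pi fun k => (ψ.mulShift k).toMonoidHom.comp σ.toMonoidHom

lemma fourierChar_apply (ψ : AddChar (ZMod n) F) (g : G) (k : ZMod n) :
    fourierChar σ ψ g k = ψ (k * (σ g).toAdd) :=
  rfl

noncomputable def fourier (ψ : AddChar (ZMod n) F) : F[G] →ₐ[F] (ZMod n → F) :=
  lift F (ZMod n → F) G (fourierChar σ ψ)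

lemma fourier_single (ψ : AddChar (ZMod n) F) (g : G) (a : F) (k : ZMod n) :
    fourier σ ψ (single g a) k = a * ψ (k * (σ g).toAdd) := by
  simp [fourier, fourierChar_apply]

lemma fourier_apply [Fintype G] [NeZero n] (ψ : AddChar (ZMod n) F) (x : F[G]) (k : ZMod n) :
    fourier σ ψ x k = ∑ g, x.coeff g * ψ (k * (σ g).toAdd) := by
  rw [fourier, lift_apply, Finsupp.sum_fintype _ _ (by simp), Finset.sum_apply]
  simp [fourierChar_apply]

lemma aug_apply_eq_fourier_zero (ψ : AddChar (ZMod n) F) (x : F[G]) :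
    aug F G x = fourier σ ψ x 0 := by
  induction x using induction_linear with
  | zero => simp
  | add x y hx hy => simp [hx, hy]
  | single g a => simp [aug, fourier_single]

lemma fourier_invo (ψ : AddChar (ZMod n) F) (x : F[G]) (k : ZMod n) :
    fourier σ ψ (invo F G x) k = fourier σ ψ x (-k) := by
  induction x using induction_linear with
  | zero => simp [invo]
  | add x y hx hy => simp_all [invo, mapDomain_add]
  | single g a => simp [invo, mapDomain_single, fourier_single, map_inv]

lemma fourier_inversion [Fintype G] [NeZero n] {ψ : AddChar (ZMod n) F} (hψ : ψ.IsPrimitive)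
    (x : F[G]) (g : G) : (n : F) * x.coeff g = ∑ k, fourier σ ψ x k * ψ (-(k * (σ g).toAdd)) := by
  classical
  have orth (h : G) : ∑ k : ZMod n, ψ (k * ((σ h).toAdd - (σ g).toAdd)) =
      if h = g then (n : F) else 0 := by
    simp [AddChar.sum_mulShift _ hψ, sub_eq_zero, ZMod.card]
  calc
    (n : F) * x.coeff g = ∑ h, x.coeff h * if h = g then (n : F) else 0 := by
      rw [Finset.sum_eq_single_of_mem g (Finset.mem_univ g) (fun h _ hh => by simp [hh]),
        if_pos rfl, mul_comm]
    _ = ∑ h, ∑ k, x.coeff h * ψ (k * (σ h).toAdd) * ψ (-(k * (σ g).toAdd)) := by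
      refine Finset.sum_congr rfl fun h _ => ?_
      rw [← orth h, Finset.mul_sum]
      simp_rw [mul_assoc, ← AddChar.map_add_eq_mul, mul_sub, sub_eq_add_neg]
    _ = ∑ k, fourier σ ψ x k * ψ (-(k * (σ g).toAdd)) := by
      rw [Finset.sum_comm]
      simp_rw [fourier_apply, Finset.sum_mul]

lemma fourier_injective [NeZero n] {ψ : AddChar (ZMod n) F} (hψ : ψ.IsPrimitive)
    (hn : (n : F) ≠ 0) : Function.Injective (fourier σ ψ) := by
  let : Fintype G := Fintype.ofEquiv _ σ.symm.toEquiv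
  refine (injective_iff_map_eq_zero _).mpr fun x hx => coeff_injective (Finsupp.ext fun g => ?_)
  have h := fourier_inversion σ hψ x g
  simp only [hx, Pi.zero_apply, zero_mul, Finset.sum_const_zero, mul_eq_zero, hn, false_or] at h
  exact h

lemma fourier_bijective [NeZero n] {ψ : AddChar (ZMod n) F} (hψ : ψ.IsPrimitive)
    (hn : (n : F) ≠ 0) : Function.Bijective (fourier σ ψ) := by
  let : Fintype G := Fintype.ofEquiv _ σ.symm.toEquiv
  have hrank : Module.finrank F F[G] = Module.finrank F (ZMod n → F) := by
    rw [(coeffLinearEquiv F).finrank_eq]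
    simp [Fintype.card_congr σ.toEquiv]
  have hinj := fourier_injective σ hψ hn
  exact ⟨hinj, (LinearMap.injective_iff_surjective_of_finrank_eq_finrank hrank
    (f := (fourier σ ψ).toLinearMap)).mp hinj⟩

noncomputable def fourierEquiv [NeZero n] {ψ : AddChar (ZMod n) F} (hψ : ψ.IsPrimitive)
    (hn : (n : F) ≠ 0) : F[G] ≃ₐ[F] (ZMod n → F) :=
  AlgEquiv.ofBijective _ (fourier_bijective σ hψ hn)

end MonoidAlgebra

lemma mem_normUnits_iff {F G : Type*} [CommSemiring F] [Monoid G] (u : (MonoidAlgebra F G)ˣ) :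
    u ∈ normUnits F G ↔ aug F G u = 1 := by
  rw [normUnits, MonoidHom.mem_ker, Units.ext_iff]
  rfl

noncomputable def symmetricNormUnitsEquiv {F : Type*} [Field F] {n : ℕ} [NeZero n] {G : Type*}
    [Group G] (σ : G ≃* Multiplicative (ZMod n)) {ψ : AddChar (ZMod n) F} (hψ : ψ.IsPrimitive)
    (hn : (n : F) ≠ 0) :
    {u : (MonoidAlgebra F G)ˣ // u ∈ normUnits F G ∧ invo F G u = u} ≃
      {v : ZMod n → Fˣ // v 0 = 1 ∧ ∀ k, v (-k) = v k} :=
  ((Units.mapEquiv (fourierEquiv σ hψ hn).toMulEquiv).trans MulEquiv.piUnits).toEquiv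
    |>.subtypeEquiv fun u => by
      have hsymm : invo F G u = u ↔ ∀ k, fourier σ ψ u (-k) = fourier σ ψ u k := by
        rw [← (fourier_injective σ hψ hn).eq_iff, funext_iff]
        simp only [fourier_invo]
      simp only [mem_normUnits_iff, aug_apply_eq_fourier_zero σ ψ, hsymm, Units.ext_iff]
      rfl

lemma card_symmetric_fun_zmod (n : ℕ) [NeZero n] (M : Type*) [One M] :
    Nat.card {v : ZMod n → M // v 0 = 1 ∧ ∀ k, v (-k) = v k} = Nat.card M ^ (n / 2) := by
  -- `k ↦ |k|` for the representative of `k` in `(-n/2, n/2]`; its fibres are the pairs `{k, -k}`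
  let absIdx (k : ZMod n) : Fin (n / 2 + 1) :=
    ⟨k.valMinAbs.natAbs, Nat.lt_succ_of_le k.natAbs_valMinAbs_le⟩
  have absIdx_natCast (j : Fin (n / 2 + 1)) : absIdx (j : ℕ) = j :=
    Fin.ext (by simp [absIdx, ZMod.valMinAbs_natCast_of_le_half (Nat.le_of_lt_succ j.isLt)])
  have apply_natCast_absIdx {v : ZMod n → M} (hv : ∀ k, v (-k) = v k) (k : ZMod n) :
      v ((absIdx k : ℕ) : ZMod n) = v k := by
    simp only [absIdx, ZMod.natCast_natAbs_valMinAbs]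
    split_ifs
    exacts [rfl, hv k]
  let restrict (v : ZMod n → M) : Fin (n / 2 + 1) → M := fun j => v (j : ℕ)
  let extend (w : Fin (n / 2) → M) : Fin (n / 2 + 1) → M := Fin.cons 1 w
  let e : {v : ZMod n → M // v 0 = 1 ∧ ∀ k, v (-k) = v k} ≃ (Fin (n / 2) → M) :=
    { toFun v := Fin.tail (restrict v)
      invFun w := ⟨fun k => extend w (absIdx k), by simp [absIdx, extend], by simp [absIdx]⟩
      left_inv := by
        rintro ⟨v, hv0, hv⟩
        ext k
        have : extend (Fin.tail (restrict v)) = restrict v := by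
          rw [← Fin.cons_self_tail (restrict v)]
          simp [extend, restrict, hv0]
        simp only [this, restrict, apply_natCast_absIdx hv]
      right_inv w := by
        ext i
        change extend w (absIdx ((i.succ : ℕ) : ZMod n)) = w i
        rw [absIdx_natCast]
        exact Fin.cons_succ _ _ _ }
  rw [Nat.card_congr e, Nat.card_fun, Nat.card_eq_fintype_card (α := Fin _), Fintype.card_fin]

theorem stmt2_general (p q f : ℕ) (hqodd : Odd q)
    (F : Type*) [Field F] [Fintype F] (hF : Fintype.card F = p ^ f)
    (hdvd : q ∣ p ^ f - 1)
    (B : Type*) [Group B] [IsCyclic B] (hB : Nat.card B = q) :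
    Nat.card {u : (MonoidAlgebra F B)ˣ // u ∈ normUnits F B ∧
        invo F B (u : MonoidAlgebra F B) = (u : MonoidAlgebra F B)} =
      (p ^ f - 1) ^ ((q - 1) / 2) := by
  have : NeZero q := ⟨hqodd.pos.ne'⟩
  rw [← hF] at hdvd
  obtain ⟨ζ, hζ⟩ := exists_isPrimitiveRoot_of_dvd_card_sub_one hdvd
  have σ : B ≃* Multiplicative (ZMod q) := mulEquivOfCyclicCardEq (by simp [hB])
  have hψ := AddChar.zmodChar_primitive_of_primitive_root q hζ
  rw [Nat.card_congr (symmetricNormUnitsEquiv σ hψ (natCast_ne_zero_of_dvd_card_sub_one hdvd)),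
    card_symmetric_fun_zmod, Nat.card_units, Nat.card_eq_fintype_card, hF]
  obtain ⟨m, rfl⟩ := hqodd
  congr 1
  omega

theorem stmt2 (p q f : ℕ) (hp : p.Prime) (hq : q.Prime) (hqodd : Odd q)
    (F : Type*) [Field F] [Fintype F] (hF : Fintype.card F = p ^ f) (hF3 : 3 < p ^ f)
    (hdvd : q ∣ p ^ f - 1)
    (B : Type*) [Group B] [IsCyclic B] (hB : Nat.card B = q) :
    Nat.card {u : (MonoidAlgebra F B)ˣ // u ∈ normUnits F B ∧
        invo F B (u : MonoidAlgebra F B) = (u : MonoidAlgebra F B)} =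
      (p ^ f - 1) ^ ((q - 1) / 2) :=
  stmt2_general p q f hqodd F hF hdvd B hB
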